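/- arXiv:2410.17522 — 3 statements merged into one kernel-verified Lean document; each statement's English description precedes it below -/
import Mathlib

section
/- For any odd prime p, the central Delannoy numbers satisfy D_{p−1} ≡ 1 (mod p) and D_p ≡ 3 (mod p). -/
/-!
Modulo `p`, every term of `D (p - 1)` with `0 < k < p` contains the factor `C(p - 1 + k, k)`,
and every term of `D p` with `0 < k < p` the factor `C(p, k)`; both are divisible by `p`.
What survives is the `k = 0` term `1`, plus for `D p` the `k = p` term `C(2p, p)`, which is
`C(2, 1) = 2` modulo `p` by Lucas' theorem.
-/

def D (n : ℕ) : ℤ :=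
  ∑ k ∈ Finset.range (n + 1), (n.choose k : ℤ) * ((n + k).choose k : ℤ)

open Finset

theorem Finset.sum_range_modEq_apply_zero {m : ℤ} {n : ℕ} {f : ℕ → ℤ} (hn : 0 < n)
    (hf : ∀ k ∈ Ico 1 n, m ∣ f k) : ∑ k ∈ range n, f k ≡ f 0 [ZMOD m] := by
  rw [range_eq_Ico, sum_eq_sum_Ico_succ_bot hn]
  simpa using (Int.modEq_zero_iff_dvd.2 (dvd_sum hf)).add_left (f 0)

theorem Nat.Prime.choose_two_mul_modEq_two {p : ℕ} (hp : p.Prime) :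
    ((2 * p).choose p : ℤ) ≡ 2 [ZMOD p] := by
  have := Fact.mk hp
  simpa [mul_comm] using Choose.choose_mul_mul_modEq_choose (p := p) (a := 2) (b := 1)

theorem D_pred_prime_modEq_one {p : ℕ} (hp : p.Prime) : D (p - 1) ≡ 1 [ZMOD p] := by
  have hp1 := hp.one_lt
  refine (sum_range_modEq_apply_zero (by omega) fun k hk => ?_).trans (by simp)
  rw [mem_Ico] at hk
  have hdvd : p ∣ (p - 1 + k).choose k := hp.dvd_choose (by omega) (by omega) (by omega)
  exact dvd_mul_of_dvd_right (Int.natCast_dvd_natCast.2 hdvd) _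

theorem D_prime_modEq_three {p : ℕ} (hp : p.Prime) : D p ≡ 3 [ZMOD p] := by
  have hp1 := hp.one_lt
  have hlow : ∑ k ∈ range p, (p.choose k : ℤ) * ((p + k).choose k : ℤ) ≡ 1 [ZMOD p] := by
    refine (sum_range_modEq_apply_zero (by omega) fun k hk => ?_).trans (by simp)
    rw [mem_Ico] at hk
    have hdvd : p ∣ p.choose k := hp.dvd_choose_self (by omega) hk.2
    exact dvd_mul_of_dvd_left (Int.natCast_dvd_natCast.2 hdvd) _
  rw [D, sum_range_succ, Nat.choose_self, ← two_mul]
  simpa using hlow.add hp.choose_two_mul_modEq_two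

theorem stmt10_general (p : ℕ) (hp : p.Prime) :
    D (p - 1) ≡ 1 [ZMOD p] ∧ D p ≡ 3 [ZMOD p] :=
  ⟨D_pred_prime_modEq_one hp, D_prime_modEq_three hp⟩

theorem stmt10 (p : ℕ) (hp : p.Prime) (hp2 : Odd p) :
    D (p - 1) ≡ 1 [ZMOD p] ∧ D p ≡ 3 [ZMOD p] :=
  stmt10_general p hp
end

section
/- For every positive integer n, n D_n D_{n−1} = 3 ∑_{j=0}^{n−1} (n−j) C(n+j,2j) C(2j,j)^2 2^j. -/
open Finset Polynomial
open scoped Nat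

theorem Nat.cast_choose_mul_succ_eq {R : Type*} [CommRing R] (m k : ℕ) :
    (m.choose k : R) * (m + 1) = (m + 1).choose k * ((m : R) + 1 - k) := by
  rcases le_or_gt k (m + 1) with hk | hk
  · have h := congrArg (Nat.cast : ℕ → R) (Nat.choose_mul_succ_eq m k)
    push_cast [Nat.cast_sub hk] at h
    exact h
  · simp [Nat.choose_eq_zero_of_lt hk, Nat.choose_eq_zero_of_lt (show m < k by omega)]

section CentralDescPochhammer

variable {R : Type*} [CommRing R]

/-- `∏_{i = 1-k}^{k} (x + i)` -/
noncomputable def centralDescPochhammer (k : ℕ) (x : R) : R :=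
  (descPochhammer R (2 * k)).eval (x + k)

theorem centralDescPochhammer_succ (k : ℕ) (x : R) :
    centralDescPochhammer (k + 1) x = (x + k + 1) * (x - k) * centralDescPochhammer k x := by
  rw [centralDescPochhammer, centralDescPochhammer, show 2 * (k + 1) = 2 * k + 1 + 1 by ring,
    descPochhammer_succ_left]
  simp only [eval_mul, eval_X, eval_comp, eval_sub, eval_one, descPochhammer_succ_eval]
  push_cast
  ring_nf

theorem centralDescPochhammer_succ_eq_mul_add_one (k : ℕ) (x : R) :
    centralDescPochhammer (k + 1) x
      = (x - k) * (x - k + 1) * centralDescPochhammer k (x + 1) := by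
  simp only [centralDescPochhammer, show 2 * (k + 1) = 2 * k + 1 + 1 by ring,
    descPochhammer_succ_eval]
  push_cast
  ring_nf

theorem centralDescPochhammer_succ_add_one (k : ℕ) (x : R) :
    centralDescPochhammer (k + 1) (x + 1)
      = (x + k + 2) * (x + k + 1) * centralDescPochhammer k x := by
  simp only [centralDescPochhammer, show 2 * (k + 1) = 2 * k + 1 + 1 by ring,
    descPochhammer_succ_left, eval_mul, eval_X, eval_comp, eval_sub, eval_one]
  push_cast
  ring_nf

theorem centralDescPochhammer_recurrence (k : ℕ) (x : R) :
    (x + 2) * centralDescPochhammer (k + 1) (x + 2) + (x + 1) * centralDescPochhammer (k + 1) x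
      = (2 * x + 3) * (centralDescPochhammer (k + 1) (x + 1)
        + 2 * (k + 1) ^ 2 * centralDescPochhammer k (x + 1)) := by
  rw [show x + 2 = x + 1 + 1 by ring, centralDescPochhammer_succ_add_one,
    centralDescPochhammer_succ k (x + 1), centralDescPochhammer_succ_eq_mul_add_one k x]
  ring

theorem centralDescPochhammer_weighted_recurrence (k : ℕ) (x : R) :
    (x + 2) ^ 2 * centralDescPochhammer (k + 1) (x + 2)
      - (x + 1) ^ 2 * centralDescPochhammer (k + 1) x
      = (2 * x + 3) * ((2 * k + 3) * centralDescPochhammer (k + 1) (x + 1)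
        + 2 * (k + 1) ^ 3 * centralDescPochhammer k (x + 1)) := by
  rw [show x + 2 = x + 1 + 1 by ring, centralDescPochhammer_succ_add_one,
    centralDescPochhammer_succ k (x + 1), centralDescPochhammer_succ_eq_mul_add_one k x]
  ring

end CentralDescPochhammer

def delannoyTerm (m k : ℕ) : ℤ := m.choose k * (m + k).choose k

def squareTerm (m j : ℕ) : ℤ := (m + j).choose (2 * j) * (2 * j).choose j ^ 2 * 2 ^ j

def squareSum (m : ℕ) : ℤ := ∑ j ∈ range (m + 1), squareTerm m j

def weightedSquareSum (m : ℕ) : ℤ := 3 * ∑ j ∈ range m, ((m : ℤ) - j) * squareTerm m j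

theorem factorial_sq_mul_delannoyTerm (m k : ℕ) :
    (k ! : ℤ) ^ 2 * delannoyTerm m k = centralDescPochhammer k (m : ℤ) := by
  have h : (m + k).descFactorial (2 * k) = k ! * m.choose k * (k ! * (m + k).choose k) := by
    rw [← Nat.descFactorial_mul_descFactorial (show k ≤ 2 * k by omega),
      show m + k - k = m by omega, show 2 * k - k = k by omega,
      Nat.descFactorial_eq_factorial_mul_choose, Nat.descFactorial_eq_factorial_mul_choose]
  rw [centralDescPochhammer, ← Nat.cast_add, descPochhammer_eval_eq_descFactorial, h,
    delannoyTerm]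
  push_cast
  ring

theorem squareTerm_eq_delannoyTerm_mul (m j : ℕ) :
    squareTerm m j = delannoyTerm m j * (2 * j).choose j * 2 ^ j := by
  have h := Nat.choose_mul (n := m + j) (k := 2 * j) (s := j) (by omega)
  rw [show m + j - j = m by omega, show 2 * j - j = j by omega] at h
  rw [squareTerm, delannoyTerm, sq, ← mul_assoc, ← Nat.cast_mul, h]
  push_cast
  ring

theorem delannoyTerm_recurrence (n k : ℕ) :
    (n + 2 : ℤ) * delannoyTerm (n + 2) (k + 1) + (n + 1) * delannoyTerm n (k + 1)
      = (2 * n + 3) * (delannoyTerm (n + 1) (k + 1) + 2 * delannoyTerm (n + 1) k) := by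
  refine mul_left_cancel₀ (pow_ne_zero 2 (Nat.cast_ne_zero.2 (k + 1).factorial_ne_zero)) ?_
  have h := centralDescPochhammer_recurrence k (n : ℤ)
  have h2 := factorial_sq_mul_delannoyTerm (n + 2) (k + 1)
  have h1 := factorial_sq_mul_delannoyTerm (n + 1) (k + 1)
  have h0 := factorial_sq_mul_delannoyTerm n (k + 1)
  have hk := factorial_sq_mul_delannoyTerm (n + 1) k
  rw [Nat.factorial_succ] at h2 h1 h0 ⊢
  push_cast at h2 h1 h0 hk ⊢
  linear_combination h + (n + 2 : ℤ) * h2 + (n + 1 : ℤ) * h0 - (2 * n + 3 : ℤ) * h1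
    - 2 * (2 * n + 3 : ℤ) * (k + 1) ^ 2 * hk

theorem delannoyTerm_weighted_recurrence (n k : ℕ) :
    (n + 2 : ℤ) ^ 2 * delannoyTerm (n + 2) (k + 1) - (n + 1) ^ 2 * delannoyTerm n (k + 1)
      = (2 * n + 3) * ((2 * k + 3) * delannoyTerm (n + 1) (k + 1)
        + 2 * (k + 1) * delannoyTerm (n + 1) k) := by
  refine mul_left_cancel₀ (pow_ne_zero 2 (Nat.cast_ne_zero.2 (k + 1).factorial_ne_zero)) ?_
  have h := centralDescPochhammer_weighted_recurrence k (n : ℤ)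
  have h2 := factorial_sq_mul_delannoyTerm (n + 2) (k + 1)
  have h1 := factorial_sq_mul_delannoyTerm (n + 1) (k + 1)
  have h0 := factorial_sq_mul_delannoyTerm n (k + 1)
  have hk := factorial_sq_mul_delannoyTerm (n + 1) k
  rw [Nat.factorial_succ] at h2 h1 h0 ⊢
  push_cast at h2 h1 h0 hk ⊢
  linear_combination h + (n + 2 : ℤ) ^ 2 * h2 - (n + 1 : ℤ) ^ 2 * h0
    - (2 * n + 3 : ℤ) * (2 * k + 3) * h1 - 2 * (2 * n + 3 : ℤ) * (k + 1) ^ 3 * hk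

theorem squareTerm_recurrence (n k : ℕ) :
    (n + 2 : ℤ) ^ 2 * squareTerm (n + 2) (k + 1) - (n + 1) ^ 2 * squareTerm n (k + 1)
      = (2 * n + 3) * ((2 * k + 3) * squareTerm (n + 1) (k + 1)
        + 8 * (2 * k + 1) * squareTerm (n + 1) k) := by
  have hc : ((k + 1 : ℕ) : ℤ) * ((2 * (k + 1)).choose (k + 1) * 2 ^ (k + 1))
      = 4 * (2 * k + 1) * ((2 * k).choose k * 2 ^ k) := by
    have h := congrArg (Nat.cast : ℕ → ℤ) (Nat.succ_mul_centralBinom_succ k)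
    simp only [Nat.centralBinom_eq_two_mul_choose] at h
    push_cast at h ⊢
    linear_combination 2 ^ k * 2 * h
  simp only [squareTerm_eq_delannoyTerm_mul]
  push_cast at hc
  linear_combination ((2 * (k + 1)).choose (k + 1) * 2 ^ (k + 1) : ℤ)
      * delannoyTerm_weighted_recurrence n k
    + 2 * (2 * n + 3 : ℤ) * delannoyTerm (n + 1) k * hc

theorem sub_mul_squareTerm_succ (n j : ℕ) :
    ((n : ℤ) + 1 - j) * squareTerm (n + 1) j = (n + 1 + j) * squareTerm n j := by
  have h := Nat.cast_choose_mul_succ_eq (R := ℤ) (n + j) (2 * j)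
  rw [show n + j + 1 = n + 1 + j by omega] at h
  simp only [squareTerm]
  push_cast at h ⊢
  linear_combination (-((2 * j).choose j ^ 2 * 2 ^ j : ℤ)) * h

theorem delannoyTerm_eq_zero {m k : ℕ} (h : m < k) : delannoyTerm m k = 0 := by
  simp [delannoyTerm, Nat.choose_eq_zero_of_lt h]

theorem squareTerm_eq_zero {m j : ℕ} (h : m < j) : squareTerm m j = 0 := by
  simp [squareTerm, Nat.choose_eq_zero_of_lt (show m + j < 2 * j by omega)]

theorem sum_range_delannoyTerm {m N : ℕ} (h : m < N) :
    ∑ k ∈ range N, delannoyTerm m k = D m :=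
  eventually_constant_sum (fun _ hk => delannoyTerm_eq_zero hk) h

theorem sum_range_delannoyTerm_succ {m N : ℕ} (h : m ≤ N) :
    ∑ k ∈ range N, delannoyTerm m (k + 1) = D m - 1 := by
  rw [← sum_range_delannoyTerm (show m < N + 1 by omega), sum_range_succ']
  simp [delannoyTerm]

theorem sum_range_squareTerm {m N : ℕ} (h : m < N) :
    ∑ j ∈ range N, squareTerm m j = squareSum m :=
  eventually_constant_sum (fun _ hj => squareTerm_eq_zero hj) h

theorem sum_range_squareTerm_succ {m N : ℕ} (h : m ≤ N) :
    ∑ j ∈ range N, squareTerm m (j + 1) = squareSum m - 1 := by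
  rw [← sum_range_squareTerm (show m < N + 1 by omega), sum_range_succ']
  simp [squareTerm]

theorem weightedSquareSum_eq_sum_range {m N : ℕ} (h : m ≤ N) :
    weightedSquareSum m = 3 * ∑ j ∈ range N, ((m : ℤ) - j) * squareTerm m j := by
  rw [weightedSquareSum, eventually_constant_sum _ h]
  intro j hj
  rcases hj.eq_or_lt with rfl | hj
  · simp
  · simp [squareTerm_eq_zero hj]

theorem D_recurrence (n : ℕ) :
    (n + 2 : ℤ) * D (n + 2) + (n + 1) * D n = 3 * (2 * n + 3) * D (n + 1) := by
  have h := sum_congr rfl fun (k : ℕ) (_ : k ∈ range (n + 2)) => delannoyTerm_recurrence n k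
  simp only [sum_add_distrib, ← mul_sum] at h
  rw [sum_range_delannoyTerm_succ le_rfl, sum_range_delannoyTerm_succ (by omega),
    sum_range_delannoyTerm_succ (by omega), sum_range_delannoyTerm (by omega)] at h
  linear_combination h

theorem weightedSquareSum_succ_add (n : ℕ) :
    weightedSquareSum (n + 1) + weightedSquareSum n = 3 * (2 * n + 1) * squareSum n := by
  rw [weightedSquareSum_eq_sum_range (N := n + 1) (by omega),
    weightedSquareSum_eq_sum_range (N := n + 1) (by omega), ← sum_range_squareTerm (lt_add_one n),
    ← mul_add, ← sum_add_distrib, mul_assoc]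
  congr 1
  rw [mul_sum]
  refine sum_congr rfl fun j _ => ?_
  push_cast
  linear_combination sub_mul_squareTerm_succ n j

theorem squareSum_recurrence (n : ℕ) :
    (n + 2 : ℤ) ^ 2 * squareSum (n + 2)
      = 9 * (2 * n + 3) ^ 2 * squareSum (n + 1) + (n + 1) ^ 2 * squareSum n
        - 6 * (2 * n + 3) * weightedSquareSum (n + 1) := by
  set T := ∑ j ∈ range (n + 3), (2 * (j : ℤ) + 1) * squareTerm (n + 1) j with hT_def
  have hT : 3 * T = 3 * (2 * n + 3) * squareSum (n + 1) - 2 * weightedSquareSum (n + 1) := by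
    rw [weightedSquareSum_eq_sum_range (N := n + 3) (by omega),
      ← sum_range_squareTerm (show n + 1 < n + 3 by omega), mul_sum, mul_sum, mul_sum, mul_sum,
      ← sum_sub_distrib]
    refine sum_congr rfl fun j _ => ?_
    push_cast
    ring
  have hT_succ :
      ∑ k ∈ range (n + 3), (2 * (k : ℤ) + 3) * squareTerm (n + 1) (k + 1) = T - 1 := by
    rw [eq_sub_iff_add_eq, sum_range_succ, squareTerm_eq_zero (show n + 1 < n + 2 + 1 by omega),
      mul_zero, add_zero, hT_def, sum_range_succ' _ (n + 2)]
    refine congrArg₂ (· + ·) (sum_congr rfl fun k _ => ?_) ?_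
    · push_cast
      ring
    · simp [squareTerm]
  have h := sum_congr rfl fun (k : ℕ) (_ : k ∈ range (n + 3)) => squareTerm_recurrence n k
  simp only [mul_assoc, sum_sub_distrib, sum_add_distrib, ← mul_sum] at h
  rw [sum_range_squareTerm_succ (by omega), sum_range_squareTerm_succ (by omega), hT_succ] at h
  linear_combination h + 3 * (2 * n + 3) * hT

structure SolvesCoupledRecurrence (X Y : ℕ → ℤ) : Prop where
  add_succ : ∀ n : ℕ, Y (n + 1) + Y n = 3 * (2 * n + 1) * X n
  add_two : ∀ n : ℕ, ((n : ℤ) + 2) ^ 2 * X (n + 2)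
    = 9 * (2 * n + 3) ^ 2 * X (n + 1) + (n + 1) ^ 2 * X n - 6 * (2 * n + 3) * Y (n + 1)

theorem SolvesCoupledRecurrence.unique {X Y X' Y' : ℕ → ℤ} (h : SolvesCoupledRecurrence X Y)
    (h' : SolvesCoupledRecurrence X' Y') (hX₀ : X 0 = X' 0) (hX₁ : X 1 = X' 1)
    (hY₀ : Y 0 = Y' 0) :
    X = X' ∧ Y = Y' := by
  have key : ∀ n, X n = X' n ∧ X (n + 1) = X' (n + 1) ∧ Y n = Y' n := by
    intro n
    induction n with
    | zero => exact ⟨hX₀, hX₁, hY₀⟩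
    | succ n ih =>
      obtain ⟨hXn, hXn₁, hYn⟩ := ih
      have hYn₁ : Y (n + 1) = Y' (n + 1) := by
        linear_combination h.add_succ n - h'.add_succ n + 3 * (2 * n + 1) * hXn - hYn
      have hXn₂ : ((n : ℤ) + 2) ^ 2 * X (n + 2) = ((n : ℤ) + 2) ^ 2 * X' (n + 2) := by
        linear_combination h.add_two n - h'.add_two n + 9 * (2 * n + 3) ^ 2 * hXn₁
          + (n + 1) ^ 2 * hXn - 6 * (2 * n + 3) * hYn₁
      exact ⟨hXn₁, mul_left_cancel₀ (by positivity) hXn₂, hYn₁⟩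
  exact ⟨funext fun n => (key n).1, funext fun n => (key n).2.2⟩

theorem solvesCoupledRecurrence_D :
    SolvesCoupledRecurrence (fun n => D n ^ 2) (fun n => n * D n * D (n - 1)) where
  add_succ n := by
    cases n with
    | zero => simp [D, sum_range_succ]
    | succ n =>
      simp only [Nat.add_sub_cancel]
      push_cast
      linear_combination D (n + 1) * D_recurrence n
  add_two n := by
    simp only [Nat.add_sub_cancel]
    push_cast
    linear_combination ((n + 2 : ℤ) * D (n + 2) + 3 * (2 * n + 3) * D (n + 1) - (n + 1) * D n)
      * D_recurrence n

theorem solvesCoupledRecurrence_squareSum :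
    SolvesCoupledRecurrence squareSum weightedSquareSum where
  add_succ := weightedSquareSum_succ_add
  add_two := squareSum_recurrence

theorem stmt11_general (n : ℕ) :
    (n : ℤ) * D n * D (n - 1)
      = 3 * ∑ j ∈ Finset.range n, ((n : ℤ) - j) * ((n + j).choose (2 * j) : ℤ)
          * ((2 * j).choose j : ℤ) ^ 2 * 2 ^ j := by
  obtain ⟨-, h⟩ := solvesCoupledRecurrence_D.unique solvesCoupledRecurrence_squareSum
    (by simp [D, squareSum, squareTerm]) (by simp [D, squareSum, squareTerm, sum_range_succ])
    (by simp [weightedSquareSum])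
  simpa [weightedSquareSum, squareTerm, mul_assoc] using congrFun h n

theorem stmt11 (n : ℕ) (hn : 0 < n) :
    (n : ℤ) * D n * D (n - 1)
      = 3 * ∑ j ∈ Finset.range n, ((n : ℤ) - j) * ((n + j).choose (2 * j) : ℤ)
          * ((2 * j).choose j : ℤ) ^ 2 * 2 ^ j :=
  stmt11_general n
end

section
/- For every positive integer n, (2/(3n(n+1))) ∑_{k=1}^n (−1)^{n−k} k^2 D_k D_{k−1} = ∑_{j=0}^{n−1} C(2j,j) C(n+j+1,j) C(n−1,j) 2^j. -/
open Finset

section BinomialRatios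

variable {K : Type*} [Field K] [CharZero K]

theorem Nat.cast_choose_eq_succ_choose_mul_div (a b : ℕ) :
    (a.choose b : K) = (a + 1).choose b * (a + 1 - b) / (a + 1) := by
  rw [eq_div_iff (Nat.cast_add_one_ne_zero _)]
  rcases le_or_gt b (a + 1) with hb | hb
  · have h := congrArg (Nat.cast : ℕ → K) (Nat.choose_mul_succ_eq a b)
    push_cast [hb] at h
    exact h
  · rw [Nat.choose_eq_zero_of_lt hb, Nat.choose_eq_zero_of_lt (by omega)]
    simp

theorem Nat.cast_succ_choose_succ (a b : ℕ) :
    ((a + 1).choose (b + 1) : K) = (a + 1) * a.choose b / (b + 1) := by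
  rw [eq_div_iff (Nat.cast_add_one_ne_zero _)]
  exact_mod_cast (Nat.add_one_mul_choose_eq a b).symm

theorem Nat.cast_choose_succ_right (a b : ℕ) :
    (a.choose (b + 1) : K) = a.choose b * (a - b) / (b + 1) := by
  rw [eq_div_iff (Nat.cast_add_one_ne_zero _)]
  rcases le_or_gt b a with hb | hb
  · have h := congrArg (Nat.cast : ℕ → K) (Nat.choose_succ_right_eq a b)
    push_cast [hb] at h
    exact h
  · rw [Nat.choose_eq_zero_of_lt hb, Nat.choose_eq_zero_of_lt (by omega)]
    simp

theorem Nat.cast_add_succ_choose (a b : ℕ) :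
    ((a + 1 + b).choose b : K) = (a + b).choose b * (a + b + 1) / (a + 1) := by
  rw [eq_div_iff (Nat.cast_add_one_ne_zero _)]
  have h := congrArg (Nat.cast : ℕ → K) (Nat.choose_mul_succ_eq (a + b) b)
  rw [show a + b + 1 - b = a + 1 by omega, show a + b + 1 = a + 1 + b by omega] at h
  push_cast at h
  linear_combination -h

theorem Nat.cast_centralBinom_succ (n : ℕ) :
    ((n + 1).centralBinom : K) = 2 * (2 * n + 1) * n.centralBinom / (n + 1) := by
  rw [eq_div_iff (Nat.cast_add_one_ne_zero _), mul_comm]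
  exact_mod_cast Nat.succ_mul_centralBinom_succ n

end BinomialRatios

theorem Finset.sum_range_choose_mul_of_lt {R : Type*} [NonAssocSemiring R] {n N : ℕ} (h : n < N)
    (f : ℕ → R) :
    ∑ k ∈ range N, (n.choose k : R) * f k = ∑ k ∈ range (n + 1), (n.choose k : R) * f k :=
  eventually_constant_sum (fun k hk => by simp [Nat.choose_eq_zero_of_lt hk]) h

theorem Finset.sum_Icc_neg_one_pow_mul_succ {R : Type*} [Ring R] (f : ℕ → R) (n : ℕ) :
    ∑ k ∈ Icc 1 (n + 1), (-1) ^ (n + 1 - k) * f k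
      = f (n + 1) - ∑ k ∈ Icc 1 n, (-1) ^ (n - k) * f k := by
  have h : ∀ k ∈ Icc 1 n, (-1 : R) ^ (n + 1 - k) * f k = -((-1) ^ (n - k) * f k) := fun k hk => by
    rw [Nat.sub_add_comm (mem_Icc.mp hk).2, pow_succ, mul_neg_one, neg_mul]
  rw [sum_Icc_succ_top (by omega), sum_congr rfl h, sum_neg_distrib, Nat.sub_self, pow_zero,
    one_mul, neg_add_eq_sub]

namespace Delannoy

def A (n : ℕ) : ℤ :=
  ∑ j ∈ range (n + 1), (n.choose j : ℤ) * ((n + j).choose j * (j.centralBinom * 2 ^ j))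

def B (n : ℕ) : ℤ :=
  ∑ j ∈ range (n + 1), (n.choose j : ℤ) * ((n + 1 + j).choose j * (j.centralBinom * 2 ^ j))

def S (n : ℕ) : ℤ :=
  ∑ j ∈ range (n + 1), (n.choose j : ℤ) * ((n + 2 + j).choose j * (j.centralBinom * 2 ^ j))

/-- Zeilberger certificate for the recurrence of `D`. -/
def certD (m k : ℕ) : ℤ := -2 * (2 * m + 3) * k ^ 2 * (m + 2).choose k * (m + k).choose k

/-- Zeilberger certificate for the recurrence of `A`; the factor `j ^ 2` makes the truncated
`j - 1` harmless at `j = 0`. -/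
def certA (m j : ℕ) : ℤ :=
  -2 * (2 * m + 3) * j ^ 2 * (m + 1).choose (j - 1) * (m + j).choose j * (j.centralBinom * 2 ^ j)

theorem certD_telescopes (m k : ℕ) :
    (m + 2) * (m + 1) * ((m + 2) * ((m + 2).choose k * (m + 2 + k).choose k)
      - 3 * (2 * m + 3) * ((m + 1).choose k * (m + 1 + k).choose k)
      + (m + 1) * (m.choose k * (m + k).choose k) : ℤ) = certD m (k + 1) - certD m k := by
  apply Int.cast_injective (α := ℚ)
  push_cast [certD]
  rw [Nat.cast_choose_eq_succ_choose_mul_div m k, Nat.cast_choose_eq_succ_choose_mul_div (m + 1) k,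
    Nat.cast_add_succ_choose (m + 1) k, Nat.cast_add_succ_choose m k,
    Nat.cast_choose_succ_right (m + 2) k, ← add_assoc m k 1, Nat.cast_succ_choose_succ (m + k) k]
  push_cast
  field_simp
  ring

theorem certA_telescopes (m j : ℕ) :
    (m + 1) * ((m + 2) ^ 2 * ((m + 2).choose j * ((m + 2 + j).choose j * (j.centralBinom * 2 ^ j)))
      - 9 * (2 * m + 3) ^ 2 * ((m + 1).choose j * ((m + 1 + j).choose j * (j.centralBinom * 2 ^ j)))
      + 18 * (m + 1) * (2 * m + 3) * (m.choose j * ((m + 1 + j).choose j * (j.centralBinom * 2 ^ j)))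
      - (m + 1) ^ 2 * (m.choose j * ((m + j).choose j * (j.centralBinom * 2 ^ j))) : ℤ)
      = certA m (j + 1) - certA m j := by
  cases j with
  | zero =>
    simp [certA, Nat.centralBinom_eq_two_mul_choose]
    ring
  | succ i =>
    apply Int.cast_injective (α := ℚ)
    push_cast [certA, Nat.add_sub_cancel]
    rw [Nat.cast_choose_eq_succ_choose_mul_div m (i + 1), Nat.cast_choose_succ_right (m + 1) i,
      Nat.cast_succ_choose_succ (m + 1) i, Nat.cast_add_succ_choose (m + 1) (i + 1),
      Nat.cast_add_succ_choose m (i + 1), ← add_assoc m (i + 1) 1,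
      Nat.cast_succ_choose_succ (m + (i + 1)) (i + 1), Nat.cast_centralBinom_succ (i + 1)]
    push_cast
    field_simp
    ring

theorem D_recurrence (m : ℕ) :
    (m + 2) * D (m + 2) = 3 * (2 * m + 3) * D (m + 1) - (m + 1) * D m := by
  have h : ((m : ℤ) + 2) * (m + 1) *
      ((m + 2) * D (m + 2) - 3 * (2 * m + 3) * D (m + 1) + (m + 1) * D m) = 0 := by
    calc _ = ∑ k ∈ range (m + 3), (certD m (k + 1) - certD m k) := by
          simp only [D]
          rw [← sum_range_choose_mul_of_lt (by omega : m + 2 < m + 3),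
            ← sum_range_choose_mul_of_lt (by omega : m + 1 < m + 3),
            ← sum_range_choose_mul_of_lt (by omega : m < m + 3),
            ← sum_congr rfl fun k _ => certD_telescopes m k]
          simp only [mul_add, mul_sub, mul_sum, sum_add_distrib, sum_sub_distrib]
      _ = 0 := by
          rw [sum_range_sub, certD, certD, Nat.choose_eq_zero_of_lt (by omega : m + 2 < m + 3)]
          simp
  linear_combination (mul_eq_zero.mp h).resolve_left (by positivity)

theorem A_recurrence (m : ℕ) :
    (m + 2) ^ 2 * A (m + 2) = 9 * (2 * m + 3) ^ 2 * A (m + 1)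
      - 18 * (m + 1) * (2 * m + 3) * B m + (m + 1) ^ 2 * A m := by
  have h : ((m : ℤ) + 1) * ((m + 2) ^ 2 * A (m + 2) - 9 * (2 * m + 3) ^ 2 * A (m + 1)
      + 18 * (m + 1) * (2 * m + 3) * B m - (m + 1) ^ 2 * A m) = 0 := by
    calc _ = ∑ j ∈ range (m + 3), (certA m (j + 1) - certA m j) := by
          simp only [A, B]
          rw [← sum_range_choose_mul_of_lt (by omega : m + 2 < m + 3),
            ← sum_range_choose_mul_of_lt (by omega : m + 1 < m + 3),
            ← sum_range_choose_mul_of_lt (by omega : m < m + 3),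
            ← sum_range_choose_mul_of_lt (by omega : m < m + 3),
            ← sum_congr rfl fun j _ => certA_telescopes m j]
          simp only [mul_add, mul_sub, mul_sum, sum_add_distrib, sum_sub_distrib]
      _ = 0 := by
          rw [sum_range_sub, certA, certA, Nat.choose_eq_zero_of_lt (by omega : m + 1 < m + 3 - 1)]
          simp
  linear_combination (mul_eq_zero.mp h).resolve_left (by positivity)

theorem B_recurrence (m : ℕ) :
    (m + 2) * B (m + 1) + (m + 1) * B m = (2 * m + 3) * A (m + 1) := by
  rw [B, B, A, ← sum_range_choose_mul_of_lt (by omega : m < m + 2), mul_sum, mul_sum, mul_sum,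
    ← sum_add_distrib]
  refine sum_congr rfl fun j _ => Int.cast_injective (α := ℚ) ?_
  push_cast
  rw [Nat.cast_choose_eq_succ_choose_mul_div m j, Nat.cast_add_succ_choose (m + 1) j]
  push_cast
  field_simp
  ring

theorem S_recurrence (m : ℕ) :
    (m + 3) * S (m + 1) + (m + 1) * S m = 2 * (m + 2) * B (m + 1) := by
  rw [S, S, B, ← sum_range_choose_mul_of_lt (by omega : m < m + 2), mul_sum, mul_sum, mul_sum,
    ← sum_add_distrib]
  refine sum_congr rfl fun j _ => Int.cast_injective (α := ℚ) ?_
  push_cast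
  rw [Nat.cast_choose_eq_succ_choose_mul_div m j, Nat.cast_add_succ_choose (m + 2) j]
  push_cast
  field_simp
  ring

theorem A_eq_sq_and_three_mul_B (n : ℕ) :
    A n = D n ^ 2 ∧ A (n + 1) = D (n + 1) ^ 2 ∧ 3 * B n = D (n + 1) * D n := by
  induction n with
  | zero => norm_num [A, B, D, sum_range_succ, Nat.centralBinom_eq_two_mul_choose]
  | succ n ih =>
    obtain ⟨hA, hA', hB⟩ := ih
    have hD := D_recurrence n
    have hA'' : A (n + 2) = D (n + 2) ^ 2 := by
      have h : ((n : ℤ) + 2) ^ 2 * A (n + 2) = ((n + 2) * D (n + 2)) ^ 2 := by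
        rw [A_recurrence, hD, hA, hA']
        linear_combination (-6 * (n + 1) * (2 * n + 3) : ℤ) * hB
      exact mul_left_cancel₀ (a := ((n : ℤ) + 2) ^ 2) (by positivity) (by linear_combination h)
    have hB' : 3 * B (n + 1) = D (n + 2) * D (n + 1) := by
      have h : ((n : ℤ) + 2) * (3 * B (n + 1)) = (n + 2) * (D (n + 2) * D (n + 1)) := by
        linear_combination 3 * B_recurrence n - (n + 1 : ℤ) * hB + 3 * (2 * n + 3 : ℤ) * hA'
          - D (n + 1) * hD
      exact mul_left_cancel₀ (by positivity) h
    exact ⟨hA', hA'', hB'⟩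

theorem three_mul_B (n : ℕ) : 3 * B n = D (n + 1) * D n :=
  (A_eq_sq_and_three_mul_B n).2.2

theorem two_mul_alternating_sum (m : ℕ) :
    2 * ∑ k ∈ Icc 1 (m + 1), (-1 : ℤ) ^ (m + 1 - k) * k ^ 2 * D k * D (k - 1)
      = 3 * (m + 1) * (m + 2) * S m := by
  induction m with
  | zero => norm_num [S, D, sum_range_succ]
  | succ m ih =>
    have h := sum_Icc_neg_one_pow_mul_succ (fun k => (k : ℤ) ^ 2 * (D k * D (k - 1))) (m + 1)
    simp only [mul_assoc] at h ih ⊢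
    rw [h, Nat.add_sub_cancel]
    push_cast
    linear_combination -ih - 3 * (m + 2 : ℤ) * S_recurrence m
      - 2 * (m + 2 : ℤ) ^ 2 * three_mul_B (m + 1)

end Delannoy

theorem stmt14_general (n : ℕ) :
    2 * ∑ k ∈ Finset.Icc 1 n, (-1 : ℤ) ^ (n - k) * k ^ 2 * D k * D (k - 1)
      = 3 * n * (n + 1) *
          ∑ j ∈ Finset.range n, ((2 * j).choose j : ℤ) * ((n + j + 1).choose j : ℤ)
            * ((n - 1).choose j : ℤ) * 2 ^ j := by
  rcases n with _ | m
  · simp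
  have hS : ∑ j ∈ range (m + 1), ((2 * j).choose j : ℤ) * ((m + 1 + j + 1).choose j : ℤ)
      * ((m + 1 - 1).choose j : ℤ) * 2 ^ j = Delannoy.S m := by
    refine sum_congr rfl fun j _ => ?_
    rw [Nat.add_sub_cancel, ← Nat.centralBinom_eq_two_mul_choose,
      show m + 1 + j + 1 = m + 2 + j by ring]
    ring
  rw [Delannoy.two_mul_alternating_sum, hS]
  push_cast
  ring

theorem stmt14 (n : ℕ) (hn : 0 < n) :
    2 * ∑ k ∈ Finset.Icc 1 n, (-1 : ℤ) ^ (n - k) * k ^ 2 * D k * D (k - 1)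
      = 3 * n * (n + 1) *
          ∑ j ∈ Finset.range n, ((2 * j).choose j : ℤ) * ((n + j + 1).choose j : ℤ)
            * ((n - 1).choose j : ℤ) * 2 ^ j :=
  stmt14_general n
end
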